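/- arXiv:1706.03284 — 2 statements merged into one kernel-verified Lean document; each statement's English description precedes it below -/
import Mathlib

section
/- Feedback-only configuration: let P = N·D⁻¹ and C_fb = [(I + L·N)·D⁻¹]⁻¹·L where I + L·N is invertible. Then, assuming all indicated inverses exist, (I − P·C_fb)⁻¹·P = N·X where X = (I + L·N)·D⁻¹. -/
theorem stmt_9 {K : Type*} [Field K] {n : ℕ}
    (N D L : Matrix (Fin n) (Fin n) K)
    (hD : IsUnit D.det) (hLN : IsUnit (1 + L * N).det)
    (P Cfb X : Matrix (Fin n) (Fin n) K)
    (hP : P = N * D⁻¹) (hCfb : Cfb = ((1 + L * N) * D⁻¹)⁻¹ * L)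
    (hX : X = (1 + L * N) * D⁻¹)
    (hloop : IsUnit (1 - P * Cfb).det) :
    (1 - P * Cfb)⁻¹ * P = N * X := by
  have hDinv : IsUnit D⁻¹.det := (Matrix.isUnit_nonsing_inv_det_iff).mpr hD
  have hCfb' : Cfb = D * (1 + L * N)⁻¹ * L := by
    rw [hCfb, Matrix.mul_inv_rev, Matrix.nonsing_inv_nonsing_inv _ hD, mul_assoc]
  have hPC : P * Cfb = N * (1 + L * N)⁻¹ * L := by
    rw [hP, hCfb']
    rw [show N * D⁻¹ * (D * (1 + L * N)⁻¹ * L) = N * (D⁻¹ * D) * ((1 + L * N)⁻¹ * L) by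
      noncomm_ring]
    rw [Matrix.nonsing_inv_mul _ hD, mul_one, mul_assoc]
  have hcomm : (1 + L * N)⁻¹ * (L * N * (1 + L * N)) = L * N := by
    rw [show L * N * (1 + L * N) = (1 + L * N) * (L * N) by noncomm_ring,
      ← mul_assoc, Matrix.nonsing_inv_mul _ hLN, one_mul]
  have key : (1 - P * Cfb) * (N * X) = P := by
    rw [hPC, hX, hP]
    have : (1 - N * (1 + L * N)⁻¹ * L) * (N * ((1 + L * N) * D⁻¹))
        = N * ((1 + L * N) - (1 + L * N)⁻¹ * (L * N * (1 + L * N))) * D⁻¹ := by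
      noncomm_ring
    rw [this, hcomm, show (1 + L * N) - L * N = 1 by noncomm_ring, mul_one]
  calc (1 - P * Cfb)⁻¹ * P = (1 - P * Cfb)⁻¹ * ((1 - P * Cfb) * (N * X)) := by rw [key]
    _ = N * X := by rw [← mul_assoc, Matrix.nonsing_inv_mul _ hloop, one_mul]
end

section
/- If P⁻¹ = D·N⁻¹ exists and C_fb = (D − D_T)·N⁻¹ with D_T invertible and I − C_fb·P invertible, then the closed-loop transfer function P·(I − C_fb·P)⁻¹ equals N·D_T⁻¹. -/
theorem stmt_10 {K : Type*} [Field K] {n : ℕ}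
    (N D DT : Matrix (Fin n) (Fin n) K)
    (hN : IsUnit N.det) (hD : IsUnit D.det) (hDT : IsUnit DT.det)
    (P Cfb : Matrix (Fin n) (Fin n) K)
    (hP : P = N * D⁻¹) (hCfb : Cfb = (D - DT) * N⁻¹)
    (hloop : IsUnit (1 - Cfb * P).det) :
    P * (1 - Cfb * P)⁻¹ = N * DT⁻¹ := by
  have key : 1 - Cfb * P = DT * D⁻¹ := by
    rw [hP, hCfb, Matrix.mul_assoc, ← Matrix.mul_assoc N⁻¹,
      Matrix.nonsing_inv_mul N hN, Matrix.one_mul, Matrix.sub_mul,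
      Matrix.mul_nonsing_inv D hD]
    noncomm_ring
  rw [key, Matrix.mul_inv_rev, Matrix.nonsing_inv_nonsing_inv D hD, hP,
    Matrix.mul_assoc, ← Matrix.mul_assoc D⁻¹, Matrix.nonsing_inv_mul D hD,
    Matrix.one_mul]
end
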